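/- Let {B_m} be a sequence of invertible n×n complex matrices. Then lim_{m→∞} s_n(B_m)^{1/m} = 1 = lim_{m→∞} s_1(B_m)^{1/m} holds if and only if lim_{m→∞} |B_m|^{1/m} = I_n. -/

import Mathlib

open Matrix Filter Topology
open scoped ComplexOrder

/-- `matAbs X = (Xᴴ X)^{1/2}`, the positive semidefinite part of the polar decomposition. -/
noncomputable def matAbs {n : ℕ} (X : Matrix (Fin n) (Fin n) ℂ) : Matrix (Fin n) (Fin n) ℂ :=
  (Matrix.posSemidef_conjTranspose_mul_self X).1.eigenvectorUnitary.1 *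
    Matrix.diagonal ((↑) ∘ (Real.sqrt ·) ∘ (Matrix.posSemidef_conjTranspose_mul_self X).1.eigenvalues) *
    (star (Matrix.posSemidef_conjTranspose_mul_self X).1.eigenvectorUnitary : Matrix (Fin n) (Fin n) ℂ)

/-- The largest singular value (spectral norm). -/
noncomputable def sMax {n : ℕ} (B : Matrix (Fin n) (Fin n) ℂ) : ℝ :=
  ⨆ i, Real.sqrt ((Matrix.posSemidef_conjTranspose_mul_self B).1.eigenvalues i)

/-- The smallest singular value. -/
noncomputable def sMin {n : ℕ} (B : Matrix (Fin n) (Fin n) ℂ) : ℝ :=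
  ⨅ i, Real.sqrt ((Matrix.posSemidef_conjTranspose_mul_self B).1.eigenvalues i)

/-- The spectral radius: the largest modulus of an eigenvalue. -/
noncomputable def specRad {n : ℕ} (B : Matrix (Fin n) (Fin n) ℂ) : ℝ :=
  sSup ((fun z => ‖z‖) '' spectrum ℂ B)

/-- A matrix is elliptic if it is diagonalizable with all eigenvalues of modulus one. -/
def Elliptic {n : ℕ} (E : Matrix (Fin n) (Fin n) ℂ) : Prop :=
  ∃ (M : Matrix (Fin n) (Fin n) ℂ) (t : Fin n → ℂ),
    IsUnit M.det ∧ (∀ i, ‖t i‖ = 1) ∧ E = M * Matrix.diagonal t * M⁻¹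

/-- A matrix is hyperbolic if it is diagonalizable with all eigenvalues real and positive. -/
def Hyperbolic {n : ℕ} (H : Matrix (Fin n) (Fin n) ℂ) : Prop :=
  ∃ (M : Matrix (Fin n) (Fin n) ℂ) (t : Fin n → ℝ),
    IsUnit M.det ∧ (∀ i, 0 < t i) ∧ H = M * Matrix.diagonal (fun i => (t i : ℂ)) * M⁻¹

/-- A matrix is unipotent if all its eigenvalues are one, i.e. `U - 1` is nilpotent. -/
def Unipotent {n : ℕ} (U : Matrix (Fin n) (Fin n) ℂ) : Prop :=
  IsNilpotent (U - 1)

/-- The Euclidean norm on `ℂⁿ`. -/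
noncomputable def enorm {n : ℕ} (v : Fin n → ℂ) : ℝ :=
  Real.sqrt (∑ i, ‖v i‖ ^ 2)

section Helpers

variable {n : ℕ}

lemma unitary_entry_norm_le {U : Matrix (Fin n) (Fin n) ℂ}
    (hU : U ∈ Matrix.unitaryGroup (Fin n) ℂ) (a b : Fin n) : ‖U a b‖ ≤ 1 := by
  have h1 : (U * star U) a a = 1 := by
    rw [(Matrix.mem_unitaryGroup_iff).mp hU]; simp
  rw [Matrix.mul_apply] at h1
  have h2 : ∀ k, U a k * (star U) k a = (Complex.normSq (U a k) : ℂ) := by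
    intro k
    rw [Matrix.star_apply]
    exact Complex.mul_conj _
  simp only [h2] at h1
  rw [← Complex.ofReal_sum] at h1
  have h3 : ∑ k, Complex.normSq (U a k) = 1 := by exact_mod_cast h1
  have h4 : Complex.normSq (U a b) ≤ 1 := by
    rw [← h3]
    exact Finset.single_le_sum (fun i _ => Complex.normSq_nonneg _) (Finset.mem_univ b)
  have h5 : ‖U a b‖ ^ 2 = Complex.normSq (U a b) := by
    rw [Complex.sq_norm]
  nlinarith [norm_nonneg (U a b)]

/-- conjugation by a unitary commutes with powers -/
lemma unitary_conj_pow (U : Matrix.unitaryGroup (Fin n) ℂ)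
    (D : Matrix (Fin n) (Fin n) ℂ) (k : ℕ) :
    ((U : Matrix (Fin n) (Fin n) ℂ) * D * star (U : Matrix (Fin n) (Fin n) ℂ)) ^ k
      = (U : Matrix (Fin n) (Fin n) ℂ) * D ^ k * star (U : Matrix (Fin n) (Fin n) ℂ) := by
  have h1 : star (U : Matrix (Fin n) (Fin n) ℂ) * U = 1 :=
    (Matrix.mem_unitaryGroup_iff').mp U.2
  have h2 : (U : Matrix (Fin n) (Fin n) ℂ) * star (U : Matrix (Fin n) (Fin n) ℂ) = 1 :=
    (Matrix.mem_unitaryGroup_iff).mp U.2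
  induction k with
  | zero => simp only [pow_zero, mul_one]; exact h2.symm
  | succ k ih =>
      rw [pow_succ, ih, pow_succ]
      have : ((U : Matrix (Fin n) (Fin n) ℂ) * D ^ k * star (U : Matrix (Fin n) (Fin n) ℂ))
          * ((U : Matrix (Fin n) (Fin n) ℂ) * D * star (U : Matrix (Fin n) (Fin n) ℂ))
          = (U : Matrix (Fin n) (Fin n) ℂ) * D ^ k
            * ((star (U : Matrix (Fin n) (Fin n) ℂ) * U) * (D * star (U : Matrix (Fin n) (Fin n) ℂ))) := by
        simp only [Matrix.mul_assoc]
      rw [this, h1, one_mul]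
      simp only [Matrix.mul_assoc]

/-- entries of `A - 1` are bounded by the total eigenvalue deviation. -/
lemma entry_sub_one_norm_le {A : Matrix (Fin n) (Fin n) ℂ} (hA : A.IsHermitian)
    (a b : Fin n) : ‖(A - 1) a b‖ ≤ ∑ j, |hA.eigenvalues j - 1| := by
  set U : Matrix (Fin n) (Fin n) ℂ := (hA.eigenvectorUnitary : Matrix (Fin n) (Fin n) ℂ) with hUdef
  have hU := (hA.eigenvectorUnitary).2
  have h2 : U * star U = 1 := (Matrix.mem_unitaryGroup_iff).mp hU
  have key : A - 1 = U * Matrix.diagonal (fun j => (hA.eigenvalues j : ℂ) - 1) * star U := by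
    have hs := hA.spectral_theorem
    rw [Unitary.conjStarAlgAut_apply] at hs
    calc A - 1 = U * Matrix.diagonal (RCLike.ofReal ∘ hA.eigenvalues) * star U - U * 1 * star U := by
          rw [← hs, mul_one, h2]
      _ = U * (Matrix.diagonal (RCLike.ofReal ∘ hA.eigenvalues) - 1) * star U := by
          rw [mul_sub, sub_mul]
      _ = U * Matrix.diagonal (fun j => (hA.eigenvalues j : ℂ) - 1) * star U := by
          rw [← Matrix.diagonal_one, Matrix.diagonal_sub]
          rfl
  rw [key]
  rw [Matrix.mul_apply]
  refine (norm_sum_le _ _).trans ?_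
  apply Finset.sum_le_sum
  intro j _
  rw [Matrix.mul_diagonal, norm_mul, norm_mul]
  have hUa : ‖U a j‖ ≤ 1 := unitary_entry_norm_le hU a j
  have hUb : ‖(star U) j b‖ ≤ 1 := by
    rw [Matrix.star_apply, norm_star]; exact unitary_entry_norm_le hU b j
  have hd : ‖(hA.eigenvalues j : ℂ) - 1‖ = |hA.eigenvalues j - 1| := by
    rw [show ((hA.eigenvalues j : ℂ) - 1) = ((hA.eigenvalues j - 1 : ℝ) : ℂ) by push_cast; ring,
      Complex.norm_real, Real.norm_eq_abs]
  calc ‖U a j‖ * ‖(hA.eigenvalues j : ℂ) - 1‖ * ‖(star U) j b‖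
      ≤ 1 * ‖(hA.eigenvalues j : ℂ) - 1‖ * 1 := by
        gcongr <;> positivity
    _ = |hA.eigenvalues j - 1| := by rw [hd]; ring

/-- eigenvalue deviation is bounded by the total entry deviation. -/
lemma eig_sub_one_abs_le {A : Matrix (Fin n) (Fin n) ℂ} (hA : A.IsHermitian)
    (j : Fin n) : |hA.eigenvalues j - 1| ≤ ∑ a, ∑ b, ‖(A - 1) a b‖ := by
  set U : Matrix (Fin n) (Fin n) ℂ := (hA.eigenvectorUnitary : Matrix (Fin n) (Fin n) ℂ) with hUdef
  have hU := (hA.eigenvectorUnitary).2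
  have h1 : star U * U = 1 := (Matrix.mem_unitaryGroup_iff').mp hU
  have key : star U * (A - 1) * U = Matrix.diagonal (fun j => (hA.eigenvalues j : ℂ) - 1) := by
    have hd := hA.conjStarAlgAut_star_eigenvectorUnitary
    rw [Unitary.conjStarAlgAut_star_apply] at hd
    rw [Matrix.mul_sub, Matrix.sub_mul, mul_one, h1, hd,
      ← Matrix.diagonal_one, Matrix.diagonal_sub]
    rfl
  have hdj : (hA.eigenvalues j : ℂ) - 1 = ∑ b, ∑ a, (star U) j a * (A - 1) a b * U b j := by
    have := congrFun (congrFun key j) j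
    rw [Matrix.diagonal_apply_eq] at this
    rw [← this, Matrix.mul_apply]
    congr 1
    ext b
    rw [Matrix.mul_apply, Finset.sum_mul]
  have habs : |hA.eigenvalues j - 1| = ‖(hA.eigenvalues j : ℂ) - 1‖ := by
    rw [show ((hA.eigenvalues j : ℂ) - 1) = ((hA.eigenvalues j - 1 : ℝ) : ℂ) by push_cast; ring,
      Complex.norm_real, Real.norm_eq_abs]
  have hswap : ∑ a, ∑ b, ‖(A - 1) a b‖ = ∑ b, ∑ a, ‖(A - 1) a b‖ := Finset.sum_comm
  rw [habs, hdj, hswap]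
  refine (norm_sum_le _ _).trans ?_
  apply Finset.sum_le_sum
  intro b _
  refine (norm_sum_le _ _).trans ?_
  apply Finset.sum_le_sum
  intro a _
  rw [norm_mul, norm_mul]
  have hUa : ‖(star U) j a‖ ≤ 1 := by
    rw [Matrix.star_apply, norm_star]; exact unitary_entry_norm_le hU a j
  have hUb : ‖U b j‖ ≤ 1 := unitary_entry_norm_le hU b j
  calc ‖(star U) j a‖ * ‖(A - 1) a b‖ * ‖U b j‖
      ≤ 1 * ‖(A - 1) a b‖ * 1 := by gcongr <;> positivity
    _ = ‖(A - 1) a b‖ := by ring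

end Helpers

section Helpers2
variable {n : ℕ}

lemma range_eigenvalues_pow {A C : Matrix (Fin n) (Fin n) ℂ} (hA : A.IsHermitian)
    (k : ℕ) (hAC : A ^ k = C) (hC : C.IsHermitian) :
    Set.range hC.eigenvalues = Set.range (fun j => hA.eigenvalues j ^ k) := by
  subst hAC
  rw [← Matrix.IsHermitian.spectrum_real_eq_range_eigenvalues hC]
  have key : A ^ k = (hA.eigenvectorUnitary : Matrix (Fin n) (Fin n) ℂ) *
      Matrix.diagonal (fun j => (hA.eigenvalues j : ℂ) ^ k) *
      star (hA.eigenvectorUnitary : Matrix (Fin n) (Fin n) ℂ) := by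
    conv_lhs => rw [hA.spectral_theorem, Unitary.conjStarAlgAut_apply]
    rw [unitary_conj_pow, Matrix.diagonal_pow]
    rfl
  rw [key]
  ext x
  rw [← spectrum.algebraMap_mem_iff ℂ, Unitary.spectrum_star_right_conjugate, spectrum_diagonal]
  simp only [Set.mem_range, Complex.coe_algebraMap, ← Complex.ofReal_pow,
    Complex.ofReal_inj]

lemma iSup_pow_eq (hn : 0 < n) (f : Fin n → ℝ) (hf : ∀ j, 0 ≤ f j) (m : ℕ) :
    (⨆ j, f j ^ m) = (⨆ j, f j) ^ m := by
  haveI : Nonempty (Fin n) := Fin.pos_iff_nonempty.mp hn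
  obtain ⟨j0, hj0⟩ := Finite.exists_max f
  have h1 : (⨆ j, f j) = f j0 :=
    le_antisymm (ciSup_le hj0) (le_ciSup (Set.Finite.bddAbove (Set.finite_range f)) j0)
  have h2 : (⨆ j, f j ^ m) = f j0 ^ m :=
    le_antisymm (ciSup_le fun j => pow_le_pow_left₀ (hf j) (hj0 j) m)
      (le_ciSup (f := fun j => f j ^ m) (Set.Finite.bddAbove (Set.finite_range _)) j0)
  rw [h1, h2]

lemma iInf_pow_eq (hn : 0 < n) (f : Fin n → ℝ) (hf : ∀ j, 0 ≤ f j) (m : ℕ) :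
    (⨅ j, f j ^ m) = (⨅ j, f j) ^ m := by
  haveI : Nonempty (Fin n) := Fin.pos_iff_nonempty.mp hn
  obtain ⟨j0, hj0⟩ := Finite.exists_min f
  have h1 : (⨅ j, f j) = f j0 :=
    le_antisymm (ciInf_le (Set.Finite.bddBelow (Set.finite_range f)) j0) (le_ciInf hj0)
  have h2 : (⨅ j, f j ^ m) = f j0 ^ m :=
    le_antisymm (ciInf_le (f := fun j => f j ^ m) (Set.Finite.bddBelow (Set.finite_range _)) j0)
      (le_ciInf fun j => pow_le_pow_left₀ (hf j0) (hj0 j) m)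
  rw [h1, h2]

end Helpers2

/-- For invertible matrices `B m`, one has `sₙ(B m)^{1/m} → 1` and `s₁(B m)^{1/m} → 1`
if and only if `|B m|^{1/m} → Iₙ`, where `|B m|^{1/m}` is encoded as the (unique)
positive semidefinite matrix `R m` with `(R m)^m = |B m| = ((B m)ᴴ (B m))^{1/2}`. -/
theorem sv_root_tendsto_one_iff {n : ℕ} (hn : 0 < n)
    (B R : ℕ → Matrix (Fin n) (Fin n) ℂ)
    (hB : ∀ m, IsUnit (B m).det)
    (hR : ∀ m, 0 < m → (R m).PosSemidef ∧ R m ^ m = matAbs (B m)) :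
    (Tendsto (fun m : ℕ => sMin (B m) ^ ((m : ℝ)⁻¹)) atTop (𝓝 1) ∧
      Tendsto (fun m : ℕ => sMax (B m) ^ ((m : ℝ)⁻¹)) atTop (𝓝 1)) ↔
    Tendsto R atTop (𝓝 (1 : Matrix (Fin n) (Fin n) ℂ)) := by
  classical
  haveI : Nonempty (Fin n) := Fin.pos_iff_nonempty.mp hn
  set ν : ℕ → Fin n → ℝ := fun m j =>
    if h : 0 < m then ((hR m h).1.1).eigenvalues j else 0 with hνdef
  have hν : ∀ m, 0 < m → ∀ (h : (R m).IsHermitian) (j : Fin n),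
      ν m j = h.eigenvalues j := by
    intro m hm h j
    simp only [hνdef]
    rw [dif_pos hm]
  have hν0 : ∀ m, 0 < m → ∀ j, 0 ≤ ν m j := by
    intro m hm j
    have hps := (hR m hm).1
    rw [hν m hm hps.1 j]
    exact hps.eigenvalues_nonneg j
  have key : ∀ m : ℕ, 0 < m →
      sMin (B m) ^ ((m : ℝ)⁻¹) = (⨅ j, ν m j) ∧
      sMax (B m) ^ ((m : ℝ)⁻¹) = (⨆ j, ν m j) := by
    intro m hm
    obtain ⟨hps, hpow⟩ := hR m hm
    have hHerm : (R m).IsHermitian := hps.1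
    have hνe : ∀ j, ν m j = hHerm.eigenvalues j := fun j => hν m hm hHerm j
    have hsq : (R m) ^ (2 * m) = (B m)ᴴ * (B m) := by
      rw [mul_comm 2 m, pow_mul, hpow]
      have hP0 := Matrix.posSemidef_conjTranspose_mul_self (B m)
      have hs0 := hP0.1.spectral_theorem
      rw [Unitary.conjStarAlgAut_apply] at hs0
      unfold matAbs
      rw [unitary_conj_pow, Matrix.diagonal_pow]
      conv_rhs => rw [hs0]
      congr 2
      congr 1
      funext i
      simp only [Pi.pow_apply, Function.comp_apply, ← Complex.ofReal_pow,
        Real.sq_sqrt (hP0.eigenvalues_nonneg i)]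
      rfl
    have hH : ((B m)ᴴ * (B m)).IsHermitian :=
      (Matrix.posSemidef_conjTranspose_mul_self (B m)).1
    have hrange := range_eigenvalues_pow hHerm (2 * m) hsq hH
    have this1 : ∀ j, Real.sqrt (hHerm.eigenvalues j ^ (2 * m)) = ν m j ^ m := by
      intro j
      rw [hνe j, mul_comm 2 m, pow_mul,
        Real.sqrt_sq (pow_nonneg (hps.eigenvalues_nonneg j) m)]
    have hsqrtrange : Set.range (fun i => Real.sqrt (hH.eigenvalues i))
        = Set.range (fun j => ν m j ^ m) := by
      calc Set.range (fun i => Real.sqrt (hH.eigenvalues i))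
          = Real.sqrt '' Set.range hH.eigenvalues := Set.range_comp Real.sqrt hH.eigenvalues
        _ = Real.sqrt '' Set.range (fun j => hHerm.eigenvalues j ^ (2 * m)) := by
            rw [hrange]
        _ = Set.range (fun j => Real.sqrt (hHerm.eigenvalues j ^ (2 * m))) :=
            (Set.range_comp Real.sqrt (fun j => hHerm.eigenvalues j ^ (2 * m))).symm
        _ = Set.range (fun j => ν m j ^ m) := by rw [funext this1]
    have hinf0 : 0 ≤ ⨅ j, ν m j := le_ciInf (fun j => hν0 m hm j)
    have hsup0 : 0 ≤ ⨆ j, ν m j :=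
      (hν0 m hm (⟨0, hn⟩ : Fin n)).trans
        (le_ciSup (Set.Finite.bddAbove (Set.finite_range _)) (⟨0, hn⟩ : Fin n))
    have hsmin : sMin (B m) = (⨅ j, ν m j) ^ m := by
      have e : sMin (B m) = ⨅ j, ν m j ^ m := by
        simp only [sMin]
        rw [← sInf_range, ← sInf_range, hsqrtrange]
      rw [e, iInf_pow_eq hn _ (fun j => hν0 m hm j) m]
    have hsmax : sMax (B m) = (⨆ j, ν m j) ^ m := by
      have e : sMax (B m) = ⨆ j, ν m j ^ m := by
        simp only [sMax]
        rw [← sSup_range, ← sSup_range, hsqrtrange]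
      rw [e, iSup_pow_eq hn _ (fun j => hν0 m hm j) m]
    constructor
    · rw [hsmin, Real.pow_rpow_inv_natCast hinf0 hm.ne']
    · rw [hsmax, Real.pow_rpow_inv_natCast hsup0 hm.ne']
  constructor
  · rintro ⟨h1, h2⟩
    have hmin : Tendsto (fun m => ⨅ j, ν m j) atTop (𝓝 1) :=
      Tendsto.congr' (eventually_atTop.mpr ⟨1, fun m hm => (key m hm).1⟩) h1
    have hmax : Tendsto (fun m => ⨆ j, ν m j) atTop (𝓝 1) :=
      Tendsto.congr' (eventually_atTop.mpr ⟨1, fun m hm => (key m hm).2⟩) h2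
    refine tendsto_pi_nhds.mpr fun a => tendsto_pi_nhds.mpr fun b => ?_
    have hb : ∀ᶠ m in atTop,
        ‖R m a b - (1 : Matrix (Fin n) (Fin n) ℂ) a b‖ ≤
          (n : ℝ) * (|(⨅ j, ν m j) - 1| + |(⨆ j, ν m j) - 1|) := by
      filter_upwards [eventually_ge_atTop 1] with m hm
      have hm' : 0 < m := hm
      have hHerm : (R m).IsHermitian := (hR m hm').1.1
      have hsub : R m a b - (1 : Matrix (Fin n) (Fin n) ℂ) a b = (R m - 1) a b :=
        (Matrix.sub_apply _ _ _ _).symm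
      rw [hsub]
      refine (entry_sub_one_norm_le hHerm a b).trans ?_
      have hbound : ∀ j, |hHerm.eigenvalues j - 1| ≤
          |(⨅ j, ν m j) - 1| + |(⨆ j, ν m j) - 1| := by
        intro j
        have hlo : (⨅ j', ν m j') ≤ ν m j :=
          ciInf_le (Set.Finite.bddBelow (Set.finite_range _)) j
        have hhi : ν m j ≤ ⨆ j', ν m j' :=
          le_ciSup (Set.Finite.bddAbove (Set.finite_range _)) j
        rw [← hν m hm' hHerm j]
        have e1 := le_abs_self ((⨆ j', ν m j') - 1)
        have e2 := neg_abs_le ((⨅ j', ν m j') - 1)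
        have e3 := abs_nonneg ((⨆ j', ν m j') - 1)
        have e4 := abs_nonneg ((⨅ j', ν m j') - 1)
        exact abs_le.mpr ⟨by linarith, by linarith⟩
      calc ∑ j, |hHerm.eigenvalues j - 1|
          ≤ ∑ _j : Fin n, (|(⨅ j, ν m j) - 1| + |(⨆ j, ν m j) - 1|) :=
            Finset.sum_le_sum (fun j _ => hbound j)
        _ = (n : ℝ) * (|(⨅ j, ν m j) - 1| + |(⨆ j, ν m j) - 1|) := by
            rw [Finset.sum_const, Finset.card_univ, Fintype.card_fin, nsmul_eq_mul]
    have hg : Tendsto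
        (fun m => (n : ℝ) * (|(⨅ j, ν m j) - 1| + |(⨆ j, ν m j) - 1|)) atTop (𝓝 0) := by
      have t1 : Tendsto (fun m => |(⨅ j, ν m j) - 1|) atTop (𝓝 0) := by
        have := (hmin.sub_const 1).abs
        simpa using this
      have t2 : Tendsto (fun m => |(⨆ j, ν m j) - 1|) atTop (𝓝 0) := by
        have := (hmax.sub_const 1).abs
        simpa using this
      have := (t1.add t2).const_mul (n : ℝ)
      simpa using this
    have h0 : Tendsto (fun m => R m a b - (1 : Matrix (Fin n) (Fin n) ℂ) a b)
        atTop (𝓝 0) := squeeze_zero_norm' hb hg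
    have h1' := h0.add_const ((1 : Matrix (Fin n) (Fin n) ℂ) a b)
    simp only [sub_add_cancel, zero_add] at h1'
    exact h1'
  · intro h
    have hS : Tendsto (fun m => ∑ a, ∑ b, ‖(R m - 1) a b‖) atTop (𝓝 0) := by
      have hent : ∀ a b : Fin n, Tendsto (fun m => ‖(R m - 1) a b‖) atTop (𝓝 0) := by
        intro a b
        have h1 : Tendsto (fun m => R m a b) atTop
            (𝓝 ((1 : Matrix (Fin n) (Fin n) ℂ) a b)) :=
          tendsto_pi_nhds.mp (tendsto_pi_nhds.mp h a) b
        have h2 : Tendsto (fun m => (R m - 1) a b) atTop (𝓝 0) := by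
          have := h1.sub_const ((1 : Matrix (Fin n) (Fin n) ℂ) a b)
          simpa [Matrix.sub_apply] using this
        simpa using h2.norm
      have := tendsto_finset_sum (Finset.univ : Finset (Fin n))
        (fun a _ => tendsto_finset_sum (Finset.univ : Finset (Fin n))
          (fun b _ => hent a b))
      simpa using this
    have hminT : Tendsto (fun m => ⨅ j, ν m j) atTop (𝓝 1) := by
      have h0 : Tendsto (fun m => (⨅ j, ν m j) - 1) atTop (𝓝 0) := by
        refine squeeze_zero_norm' ?_ hS
        filter_upwards [eventually_ge_atTop 1] with m hm
        have hm' : 0 < m := hm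
        have hHerm : (R m).IsHermitian := (hR m hm').1.1
        obtain ⟨j0, hj0⟩ := Finite.exists_min (fun j => ν m j)
        have e : (⨅ j, ν m j) = ν m j0 :=
          le_antisymm (ciInf_le (Set.Finite.bddBelow (Set.finite_range _)) j0)
            (le_ciInf hj0)
        rw [Real.norm_eq_abs, e, hν m hm' hHerm j0]
        exact eig_sub_one_abs_le hHerm j0
      have := h0.add_const 1
      simpa using this
    have hmaxT : Tendsto (fun m => ⨆ j, ν m j) atTop (𝓝 1) := by
      have h0 : Tendsto (fun m => (⨆ j, ν m j) - 1) atTop (𝓝 0) := by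
        refine squeeze_zero_norm' ?_ hS
        filter_upwards [eventually_ge_atTop 1] with m hm
        have hm' : 0 < m := hm
        have hHerm : (R m).IsHermitian := (hR m hm').1.1
        obtain ⟨j0, hj0⟩ := Finite.exists_max (fun j => ν m j)
        have e : (⨆ j, ν m j) = ν m j0 :=
          le_antisymm (ciSup_le hj0)
            (le_ciSup (Set.Finite.bddAbove (Set.finite_range _)) j0)
        rw [Real.norm_eq_abs, e, hν m hm' hHerm j0]
        exact eig_sub_one_abs_le hHerm j0
      have := h0.add_const 1
      simpa using this
    constructor
    · exact Tendsto.congr'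
        (eventually_atTop.mpr ⟨1, fun m hm => ((key m hm).1).symm⟩) hminT
    · exact Tendsto.congr'
        (eventually_atTop.mpr ⟨1, fun m hm => ((key m hm).2).symm⟩) hmaxT
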